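/- arXiv:2408.17234 — 3 statements merged into one kernel-verified Lean document; each statement's English description precedes it below -/
import Mathlib

section
/- In the Sierpiński triangle graph ST_3^n (n ≥ 0), the distance between any two vertices is at most 2^n. -/
namespace SierpinskiTriangle

/-- The unit upward triangle ("cell") with lower-left corner `c` is present in the
level-`n` Sierpiński triangle (Pascal-mod-2 characterization). -/
def Cell (n : ℕ) (c : ℕ × ℕ) : Prop :=
  Nat.land c.1 c.2 = 0 ∧ c.1 + c.2 < 2 ^ n

/-- The three corner points of the cell with lower-left corner `c`. -/
def cellCorners (c : ℕ × ℕ) : Set (ℕ × ℕ) :=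
  {c, (c.1 + 1, c.2), (c.1, c.2 + 1)}

/-- The Sierpiński triangle graph `ST₃ⁿ`, realized on the ambient type `ℕ × ℕ`
(points that are not vertices of `ST₃ⁿ` are isolated). Two distinct points are
adjacent iff they are corners of a common present cell. -/
def graph (n : ℕ) : SimpleGraph (ℕ × ℕ) where
  Adj u v := u ≠ v ∧ ∃ c, Cell n c ∧ u ∈ cellCorners c ∧ v ∈ cellCorners c
  symm := ⟨fun u v ⟨huv, c, hc, hu, hv⟩ => ⟨huv.symm, c, hc, hv, hu⟩⟩
  loopless := ⟨fun u h => h.1 rfl⟩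

/-- The vertex set of `ST₃ⁿ`. -/
def verts (n : ℕ) : Set (ℕ × ℕ) := {v | ∃ c, Cell n c ∧ v ∈ cellCorners c}

/-- The three extreme vertices of `ST₃ⁿ`. -/
def extreme (n : ℕ) : Set (ℕ × ℕ) := {(0, 0), (2 ^ n, 0), (0, 2 ^ n)}

/-- `IsCopy n m o` : the translate by `o` of `ST₃ᵐ` is one of the canonical copies
of `ST₃ᵐ` inside `ST₃ⁿ` arising from the recursive construction. -/
def IsCopy (n m : ℕ) (o : ℕ × ℕ) : Prop :=
  ∃ i j : ℕ, o = (i * 2 ^ m, j * 2 ^ m) ∧ Nat.land i j = 0 ∧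
    i * 2 ^ m + j * 2 ^ m + 2 ^ m ≤ 2 ^ n

/-- The vertex set of the copy of `ST₃ᵐ` at offset `o`. -/
def copyVerts (m : ℕ) (o : ℕ × ℕ) : Set (ℕ × ℕ) :=
  (fun v : ℕ × ℕ => (o.1 + v.1, o.2 + v.2)) '' verts m

/-- The extreme vertices of the copy of `ST₃ᵐ` at offset `o`. -/
def copyExtreme (m : ℕ) (o : ℕ × ℕ) : Set (ℕ × ℕ) :=
  {(o.1, o.2), (o.1 + 2 ^ m, o.2), (o.1, o.2 + 2 ^ m)}

/-- A walk is a shortest (geodesic) walk if its length equals the graph distance. -/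
def IsShortest {V : Type*} (G : SimpleGraph V) {u v : V} (w : G.Walk u v) : Prop :=
  w.length = G.dist u v

/-- `u` and `v` are `M`-visible: some shortest `u,v`-path avoids `M \ {u, v}`. -/
def Visible {V : Type*} (G : SimpleGraph V) (M : Set V) (u v : V) : Prop :=
  ∃ w : G.Walk u v, IsShortest G w ∧ ∀ x ∈ w.support, x ∈ M → x = u ∨ x = v

/-- The interval `I(u,v)`: the set of vertices lying on some shortest `u,v`-path. -/
def interval {V : Type*} (G : SimpleGraph V) (u v : V) : Set V :=
  {x | ∃ w : G.Walk u v, IsShortest G w ∧ x ∈ w.support}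

/-- `M` is a mutual-visibility set of `ST₃ⁿ`. -/
def IsMutualVisSet (n : ℕ) (M : Set (ℕ × ℕ)) : Prop :=
  M ⊆ verts n ∧ ∀ u ∈ M, ∀ v ∈ M, Visible (graph n) M u v

/-- `M` is a total mutual-visibility set of `ST₃ⁿ`. -/
def IsTotalMutualVisSet (n : ℕ) (M : Set (ℕ × ℕ)) : Prop :=
  M ⊆ verts n ∧ ∀ u ∈ verts n, ∀ v ∈ verts n, Visible (graph n) M u v

/-- `M` is an outer mutual-visibility set of `ST₃ⁿ`. -/
def IsOuterMutualVisSet (n : ℕ) (M : Set (ℕ × ℕ)) : Prop :=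
  IsMutualVisSet n M ∧ ∀ u ∈ M, ∀ v ∈ verts n \ M, Visible (graph n) M u v

/-- `M` is a dual mutual-visibility set of `ST₃ⁿ`. -/
def IsDualMutualVisSet (n : ℕ) (M : Set (ℕ × ℕ)) : Prop :=
  IsMutualVisSet n M ∧ ∀ u ∈ verts n \ M, ∀ v ∈ verts n \ M, Visible (graph n) M u v

/-- `M` is a general position set of `ST₃ⁿ`. -/
def IsGenPosSet (n : ℕ) (M : Set (ℕ × ℕ)) : Prop :=
  M ⊆ verts n ∧ ∀ u ∈ M, ∀ v ∈ M, ∀ w ∈ M, u ≠ v → u ≠ w → v ≠ w →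
    (graph n).dist u v ≠ (graph n).dist u w + (graph n).dist w v

/-- The proper vertices of the copy of `ST₃²` at offset `o` inside `ST₃ⁿ`: the vertices
of the copy lying on no shortest path between two of its extreme vertices. -/
def properVerts (n : ℕ) (o : ℕ × ℕ) : Set (ℕ × ℕ) :=
  copyVerts 2 o \
    (interval (graph n) (o.1, o.2) (o.1 + 4, o.2) ∪
     interval (graph n) (o.1, o.2) (o.1, o.2 + 4) ∪
     interval (graph n) (o.1 + 4, o.2) (o.1, o.2 + 4))

/-!
`ST₃ⁿ⁺¹` is the union of the three translates `o + ST₃ⁿ` with `o ∈ extreme n`, and the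
translates at `o` and `o'` share the vertex `o + o'`. Walking from `u` to `o + o'` inside the copy
containing `u`, then on to `v` inside the copy containing `v`, gives `d(u, v) ≤ 2ⁿ + 2ⁿ` by
induction. The decomposition of the cells works because a number below `2ⁿ` has no bit in common
with `2ⁿ`, and numbers with disjoint bits add without carry.
-/

end SierpinskiTriangle

theorem Nat.add_lt_two_pow_of_and_eq_zero {a b n : ℕ} (h : a &&& b = 0) (ha : a < 2 ^ n)
    (hb : b < 2 ^ n) : a + b < 2 ^ n := by
  have hand : BitVec.ofNat n a &&& BitVec.ofNat n b = 0#n := by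
    apply BitVec.eq_of_toNat_eq
    simp [Nat.mod_eq_of_lt ha, Nat.mod_eq_of_lt hb, h]
  have hsum := BitVec.toNat_add_of_and_eq_zero hand
  simp only [BitVec.toNat_ofNat, Nat.mod_eq_of_lt ha, Nat.mod_eq_of_lt hb] at hsum
  exact hsum ▸ BitVec.isLt _

theorem Nat.two_pow_add_and_of_lt {b n : ℕ} (a : ℕ) (hb : b < 2 ^ n) :
    (2 ^ n + a) &&& b = a &&& b := by
  rw [← Nat.mod_eq_of_lt (Nat.and_lt_two_pow (2 ^ n + a) hb),
    ← Nat.mod_eq_of_lt (Nat.and_lt_two_pow a hb), Nat.and_mod_two_pow, Nat.and_mod_two_pow,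
    Nat.add_mod_left]

theorem SimpleGraph.Hom.edist_map_le {V W : Type*} {G : SimpleGraph V} {H : SimpleGraph W}
    (f : G →g H) (u v : V) : H.edist (f u) (f v) ≤ G.edist u v := by
  by_cases huv : G.Reachable u v
  · obtain ⟨p, hp⟩ := huv.exists_walk_length_eq_edist
    calc H.edist (f u) (f v) ≤ (p.map f).length := SimpleGraph.edist_le _
      _ = G.edist u v := by rw [SimpleGraph.Walk.length_map, hp]
  · rw [SimpleGraph.edist_eq_top_of_not_reachable huv]
    exact le_top

namespace SierpinskiTriangle

theorem cellCorners_add (o c : ℕ × ℕ) : cellCorners (o + c) = (o + ·) '' cellCorners c := by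
  simp only [cellCorners, Set.image_insert_eq, Set.image_singleton]
  congr 2

theorem cell_add {n : ℕ} {o c : ℕ × ℕ} (ho : o ∈ extreme n) (hc : Cell n c) :
    Cell (n + 1) (o + c) := by
  obtain ⟨hland, hlt⟩ := hc
  have hpow : 2 ^ (n + 1) = 2 ^ n + 2 ^ n := by ring
  simp only [extreme, Set.mem_insert_iff, Set.mem_singleton_iff] at ho
  rcases ho with rfl | rfl | rfl
  · exact ⟨by simpa using hland, by simp; omega⟩
  · refine ⟨?_, by simp; omega⟩
    change (2 ^ n + c.1) &&& (0 + c.2) = 0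
    rwa [zero_add, Nat.two_pow_add_and_of_lt c.1 (by omega)]
  · refine ⟨?_, by simp; omega⟩
    change (0 + c.1) &&& (2 ^ n + c.2) = 0
    rwa [zero_add, Nat.and_comm, Nat.two_pow_add_and_of_lt c.2 (by omega), Nat.and_comm]

theorem exists_cell_of_cell_succ {n : ℕ} {c : ℕ × ℕ} (hc : Cell (n + 1) c) :
    ∃ o ∈ extreme n, ∃ c', Cell n c' ∧ c = o + c' := by
  obtain ⟨hland, hlt⟩ := hc
  obtain ⟨c₁, c₂⟩ := c
  change c₁ &&& c₂ = 0 at hland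
  have hpow : 2 ^ (n + 1) = 2 ^ n + 2 ^ n := by ring
  simp only [extreme, Set.mem_insert_iff, Set.mem_singleton_iff, exists_eq_or_imp,
    exists_eq_left]
  by_cases h₁ : 2 ^ n ≤ c₁
  · obtain ⟨a, rfl⟩ := Nat.exists_eq_add_of_le h₁
    rw [Nat.two_pow_add_and_of_lt a (by omega)] at hland
    exact .inr <| .inl ⟨(a, c₂), ⟨hland, by simp at hlt ⊢; omega⟩, by simp⟩
  by_cases h₂ : 2 ^ n ≤ c₂
  · obtain ⟨b, rfl⟩ := Nat.exists_eq_add_of_le h₂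
    rw [Nat.and_comm, Nat.two_pow_add_and_of_lt b (by omega), Nat.and_comm] at hland
    exact .inr <| .inr ⟨(c₁, b), ⟨hland, by simp at hlt ⊢; omega⟩, by simp⟩
  exact .inl ⟨(c₁, c₂), ⟨hland, Nat.add_lt_two_pow_of_and_eq_zero hland (by omega) (by omega)⟩,
    by simp⟩

def copyHom (n : ℕ) {o : ℕ × ℕ} (ho : o ∈ extreme n) : graph n →g graph (n + 1) where
  toFun := (o + ·)
  map_rel' := fun ⟨hne, c, hc, hu, hv⟩ =>
    ⟨by simpa using hne, o + c, cell_add ho hc,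
      cellCorners_add o c ▸ Set.mem_image_of_mem _ hu,
      cellCorners_add o c ▸ Set.mem_image_of_mem _ hv⟩

theorem verts_succ_subset (n : ℕ) : verts (n + 1) ⊆ ⋃ o ∈ extreme n, (o + ·) '' verts n := by
  rintro v ⟨c, hc, hv⟩
  obtain ⟨o, ho, c', hc', rfl⟩ := exists_cell_of_cell_succ hc
  rw [cellCorners_add] at hv
  obtain ⟨v', hv', rfl⟩ := hv
  exact Set.mem_biUnion ho ⟨v', ⟨c', hc', hv'⟩, rfl⟩

theorem extreme_subset_verts (n : ℕ) : extreme n ⊆ verts n := by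
  have hpos : 0 < 2 ^ n := by positivity
  simp only [extreme, Set.insert_subset_iff, Set.singleton_subset_iff]
  refine ⟨⟨(0, 0), ⟨rfl, hpos⟩, by simp [cellCorners]⟩,
    ⟨(2 ^ n - 1, 0), ⟨by simp [Nat.land], by simp⟩, ?_⟩,
    ⟨(0, 2 ^ n - 1), ⟨by simp [Nat.land], by simp⟩, ?_⟩⟩ <;>
  simp [cellCorners, Nat.sub_add_cancel hpos]

theorem verts_zero_eq : verts 0 = cellCorners (0, 0) := by
  ext v
  constructor
  · rintro ⟨⟨c₁, c₂⟩, ⟨-, hlt⟩, hv⟩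
    obtain ⟨rfl, rfl⟩ : c₁ = 0 ∧ c₂ = 0 := by simp at hlt; omega
    exact hv
  · exact fun hv => ⟨(0, 0), ⟨rfl, Nat.one_pos⟩, hv⟩

theorem edist_le_two_pow (n : ℕ) :
    ∀ u ∈ verts n, ∀ v ∈ verts n, (graph n).edist u v ≤ 2 ^ n := by
  induction n with
  | zero =>
    intro u hu v hv
    rw [verts_zero_eq] at hu hv
    rw [pow_zero, SimpleGraph.edist_le_one_iff_adj_or_eq]
    by_cases huv : u = v
    · exact .inr huv
    · exact .inl ⟨huv, (0, 0), ⟨rfl, Nat.one_pos⟩, hu, hv⟩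
  | succ n ih =>
    intro u hu v hv
    obtain ⟨o, ho, x, hx, rfl⟩ := Set.mem_iUnion₂.mp (verts_succ_subset n hu)
    obtain ⟨o', ho', y, hy, rfl⟩ := Set.mem_iUnion₂.mp (verts_succ_subset n hv)
    have hleft : (graph (n + 1)).edist (o + x) (o + o') ≤ (graph n).edist x o' :=
      (copyHom n ho).edist_map_le x o'
    have hright : (graph (n + 1)).edist (o + o') (o' + y) ≤ (graph n).edist o y :=
      add_comm o' o ▸ (copyHom n ho').edist_map_le o y
    calc (graph (n + 1)).edist (o + x) (o' + y)
        ≤ (graph (n + 1)).edist (o + x) (o + o') + (graph (n + 1)).edist (o + o') (o' + y) :=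
          SimpleGraph.edist_triangle
      _ ≤ 2 ^ n + 2 ^ n := add_le_add
          (hleft.trans (ih x hx o' (extreme_subset_verts n ho')))
          (hright.trans (ih o (extreme_subset_verts n ho) y hy))
      _ = 2 ^ (n + 1) := by rw [pow_succ, mul_two]

/-- In `ST₃ⁿ` (`n ≥ 0`), the distance between any two vertices is at most `2 ^ n`. -/
theorem dist_le_two_pow (n : ℕ) :
    ∀ u ∈ verts n, ∀ v ∈ verts n, (graph n).dist u v ≤ 2 ^ n := by
  intro u hu v hv
  exact ENat.toNat_le_of_le_natCast (by exact_mod_cast edist_le_two_pow n u hu v hv)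
end SierpinskiTriangle
end

section
/- The mutual-visibility number of ST_3^1 equals 4, and the general position number of ST_3^1 equals 3. -/
/-!
`ST₃¹` consists of the extreme vertices `a = (0,0)`, `b = (2,0)`, `c = (0,2)` and the inner
triangle `p = (1,0)`, `q = (0,1)`, `r = (1,1)`. It has diameter two, so both notions only involve
geodesics of length two, and for a subset of the six vertices they become decidable conditions.
The geodesics `a p b`, `a q c`, `b r c` are the unique ones between their ends, so the complement
of a mutual-visibility set meets each of them and, as no vertex lies on all three, has at least
two elements. Likewise every two-element complement leaves some geodesic `u w v` inside the set,
so a general position set misses at least three vertices. Both bounds are checked by enumerating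
the 64 subsets; `{a, b, q, r}` and `{a, b, c}` attain them.
-/

namespace SierpinskiTriangle

section Visibility

variable {V : Type*} {G : SimpleGraph V} {M : Set V} {u v x : V}

lemma dist_eq_two_of_adj_of_adj (huv : u ≠ v) (hnadj : ¬G.Adj u v) (hux : G.Adj u x)
    (hxv : G.Adj x v) : G.dist u v = 2 := by
  have hle : G.dist u v ≤ 2 := SimpleGraph.dist_le (.cons hux (.cons hxv .nil))
  have hlt : 1 < G.dist u v :=
    (hux.reachable.trans hxv.reachable).one_lt_dist_of_ne_of_not_adj huv hnadj
  omega

lemma visible_self : Visible G M u u :=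
  ⟨.nil, by simp [IsShortest], by simp⟩

lemma visible_of_adj (h : G.Adj u v) : Visible G M u v :=
  ⟨h.toWalk, by simp [IsShortest, SimpleGraph.dist_eq_one_iff_adj.2 h], by simp⟩

lemma visible_iff_of_dist_eq_two (h : G.dist u v = 2) :
    Visible G M u v ↔ ∃ x, G.Adj u x ∧ G.Adj x v ∧ x ∉ M := by
  constructor
  · rintro ⟨w, hw, hM⟩
    rw [IsShortest, h] at hw
    match w, hw with
    | .cons hux (.cons hxv .nil), _ =>
      refine ⟨_, hux, hxv, fun hx => ?_⟩
      rcases hM _ (by simp) hx with rfl | rfl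
      exacts [hux.ne rfl, hxv.ne rfl]
  · rintro ⟨x, hux, hxv, hx⟩
    refine ⟨.cons hux (.cons hxv .nil), by simp [IsShortest, h], fun y hy hyM => ?_⟩
    simp only [SimpleGraph.Walk.support_cons, SimpleGraph.Walk.support_nil, List.mem_cons,
      List.not_mem_nil, or_false] at hy
    rcases hy with rfl | rfl | rfl
    exacts [.inl rfl, absurd hyM hx, .inr rfl]

end Visibility

instance (n : ℕ) : DecidablePred (Cell n) := fun _ => inferInstanceAs (Decidable (_ ∧ _))

def cellCornerFinset (c : ℕ × ℕ) : Finset (ℕ × ℕ) := {c, (c.1 + 1, c.2), (c.1, c.2 + 1)}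

lemma coe_cellCornerFinset (c : ℕ × ℕ) :
    (cellCornerFinset c : Set (ℕ × ℕ)) = cellCorners c := by
  simp [cellCornerFinset, cellCorners]

def cells (n : ℕ) : Finset (ℕ × ℕ) :=
  (Finset.range (2 ^ n) ×ˢ Finset.range (2 ^ n)).filter (Cell n)

lemma mem_cells {n : ℕ} {c : ℕ × ℕ} : c ∈ cells n ↔ Cell n c := by
  simp only [cells, Finset.mem_filter, Finset.mem_product, Finset.mem_range,
    and_iff_right_iff_imp]
  rintro ⟨-, h⟩
  omega

lemma adj_iff_exists_mem_cells {n : ℕ} {u v : ℕ × ℕ} : (graph n).Adj u v ↔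
    u ≠ v ∧ ∃ c ∈ cells n, u ∈ cellCornerFinset c ∧ v ∈ cellCornerFinset c := by
  simp only [graph, mem_cells, ← coe_cellCornerFinset, Finset.mem_coe]

instance (n : ℕ) : DecidableRel (graph n).Adj := fun _ _ =>
  decidable_of_iff _ adj_iff_exists_mem_cells.symm

def vertFinset (n : ℕ) : Finset (ℕ × ℕ) := (cells n).biUnion cellCornerFinset

lemma coe_vertFinset (n : ℕ) : (vertFinset n : Set (ℕ × ℕ)) = verts n := by
  ext v
  simp [vertFinset, verts, mem_cells, ← coe_cellCornerFinset]

lemma mem_vertFinset_of_adj {n : ℕ} {u v : ℕ × ℕ} (h : (graph n).Adj u v) :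
    u ∈ vertFinset n := by
  obtain ⟨-, c, hc, hu, -⟩ := h
  rw [← Finset.mem_coe, coe_vertFinset]
  exact ⟨c, hc, hu⟩

lemma coe_subset_verts {n : ℕ} {T : Finset (ℕ × ℕ)} (hT : T ⊆ vertFinset n) :
    (T : Set (ℕ × ℕ)) ⊆ verts n := by
  rw [← coe_vertFinset]
  exact_mod_cast hT

lemma exists_adj_adj_of_not_adj_one :
    ∀ u ∈ vertFinset 1, ∀ v ∈ vertFinset 1, u ≠ v → ¬(graph 1).Adj u v →
      ∃ x ∈ vertFinset 1, (graph 1).Adj u x ∧ (graph 1).Adj x v := by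
  decide +kernel

def distOne (u v : ℕ × ℕ) : ℕ := if u = v then 0 else if (graph 1).Adj u v then 1 else 2

lemma dist_graph_one {u v : ℕ × ℕ} (hu : u ∈ vertFinset 1) (hv : v ∈ vertFinset 1) :
    (graph 1).dist u v = distOne u v := by
  unfold distOne
  split_ifs with huv hadj
  · simp [huv]
  · exact SimpleGraph.dist_eq_one_iff_adj.2 hadj
  · obtain ⟨x, -, hux, hxv⟩ := exists_adj_adj_of_not_adj_one u hu v hv huv hadj
    exact dist_eq_two_of_adj_of_adj huv hadj hux hxv

lemma visible_graph_one_iff {M : Set (ℕ × ℕ)} {u v : ℕ × ℕ} (hu : u ∈ vertFinset 1)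
    (hv : v ∈ vertFinset 1) : Visible (graph 1) M u v ↔ u = v ∨ (graph 1).Adj u v ∨
      ∃ x ∈ vertFinset 1, (graph 1).Adj u x ∧ (graph 1).Adj x v ∧ x ∉ M := by
  by_cases huv : u = v
  · subst huv
    exact iff_of_true visible_self (.inl rfl)
  by_cases hadj : (graph 1).Adj u v
  · exact iff_of_true (visible_of_adj hadj) (.inr (.inl hadj))
  have hdist : (graph 1).dist u v = 2 := by simp [dist_graph_one hu hv, distOne, huv, hadj]
  rw [visible_iff_of_dist_eq_two hdist]
  simp only [huv, hadj, false_or]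
  exact ⟨fun ⟨x, hux, hxv, hx⟩ => ⟨x, mem_vertFinset_of_adj hxv, hux, hxv, hx⟩,
    fun ⟨x, _, h⟩ => ⟨x, h⟩⟩

def IsMutualVisFinsetOne (T : Finset (ℕ × ℕ)) : Prop :=
  ∀ u ∈ T, ∀ v ∈ T, u = v ∨ (graph 1).Adj u v ∨
    ∃ x ∈ vertFinset 1, (graph 1).Adj u x ∧ (graph 1).Adj x v ∧ x ∉ T

instance : DecidablePred IsMutualVisFinsetOne := fun _ => by
  unfold IsMutualVisFinsetOne; infer_instance

def IsGenPosFinsetOne (T : Finset (ℕ × ℕ)) : Prop :=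
  ∀ u ∈ T, ∀ v ∈ T, ∀ w ∈ T, u ≠ v → u ≠ w → v ≠ w →
    distOne u v ≠ distOne u w + distOne w v

instance : DecidablePred IsGenPosFinsetOne := fun _ => by
  unfold IsGenPosFinsetOne; infer_instance

lemma isMutualVisSet_one_coe_iff {T : Finset (ℕ × ℕ)} (hT : T ⊆ vertFinset 1) :
    IsMutualVisSet 1 T ↔ IsMutualVisFinsetOne T := by
  simp only [IsMutualVisSet, coe_subset_verts hT, true_and, Finset.mem_coe]
  exact forall₂_congr fun u hu => forall₂_congr fun v hv =>
    visible_graph_one_iff (hT hu) (hT hv)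

lemma isGenPosSet_one_coe_iff {T : Finset (ℕ × ℕ)} (hT : T ⊆ vertFinset 1) :
    IsGenPosSet 1 T ↔ IsGenPosFinsetOne T := by
  simp only [IsGenPosSet, coe_subset_verts hT, true_and, Finset.mem_coe]
  refine forall₂_congr fun u hu => forall₂_congr fun v hv => forall₂_congr fun w hw => ?_
  rw [dist_graph_one (hT hu) (hT hv), dist_graph_one (hT hu) (hT hw),
    dist_graph_one (hT hw) (hT hv)]

lemma card_le_four_of_isMutualVisFinsetOne :
    ∀ T ∈ (vertFinset 1).powerset, IsMutualVisFinsetOne T → T.card ≤ 4 := by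
  decide +kernel

lemma card_le_three_of_isGenPosFinsetOne :
    ∀ T ∈ (vertFinset 1).powerset, IsGenPosFinsetOne T → T.card ≤ 3 := by
  decide +kernel

lemma exists_finset_of_subset_verts {n : ℕ} {M : Set (ℕ × ℕ)} (hM : M ⊆ verts n) :
    ∃ T ∈ (vertFinset n).powerset, (T : Set (ℕ × ℕ)) = M := by
  rw [← coe_vertFinset] at hM
  obtain ⟨T, rfl⟩ := ((vertFinset n).finite_toSet.subset hM).exists_finset_coe
  exact ⟨T, Finset.mem_powerset.2 (Finset.coe_subset.1 hM), rfl⟩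

/-- `μ(ST₃¹) = 4` and `gp(ST₃¹) = 3`. -/
theorem mu_gp_one :
    ((∀ M : Set (ℕ × ℕ), IsMutualVisSet 1 M → M.ncard ≤ 4) ∧
      ∃ M : Set (ℕ × ℕ), IsMutualVisSet 1 M ∧ M.ncard = 4) ∧
    ((∀ M : Set (ℕ × ℕ), IsGenPosSet 1 M → M.ncard ≤ 3) ∧
      ∃ M : Set (ℕ × ℕ), IsGenPosSet 1 M ∧ M.ncard = 3) := by
  refine ⟨⟨fun M hM => ?_, ?_⟩, fun M hM => ?_, ?_⟩
  · obtain ⟨T, hT, rfl⟩ := exists_finset_of_subset_verts hM.1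
    rw [Set.ncard_coe_finset]
    exact card_le_four_of_isMutualVisFinsetOne T hT
      ((isMutualVisSet_one_coe_iff (Finset.mem_powerset.1 hT)).1 hM)
  · refine ⟨({(0, 0), (2, 0), (0, 1), (1, 1)} : Finset (ℕ × ℕ)), ?_,
      by rw [Set.ncard_coe_finset]; rfl⟩
    exact (isMutualVisSet_one_coe_iff (by decide +kernel)).2 (by decide +kernel)
  · obtain ⟨T, hT, rfl⟩ := exists_finset_of_subset_verts hM.1
    rw [Set.ncard_coe_finset]
    exact card_le_three_of_isGenPosFinsetOne T hT
      ((isGenPosSet_one_coe_iff (Finset.mem_powerset.1 hT)).1 hM)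
  · refine ⟨({(0, 0), (2, 0), (0, 2)} : Finset (ℕ × ℕ)), ?_,
      by rw [Set.ncard_coe_finset]; rfl⟩
    exact (isGenPosSet_one_coe_iff (by decide +kernel)).2 (by decide +kernel)

end SierpinskiTriangle
end

section
/- In ST_3^2, if all three proper vertices and the three extreme vertices are selected (6 vertices total), this set is simultaneously a mutual-visibility set and a general position set of ST_3^2. -/
/-!
Every edge of `ST₃ⁿ` joins two neighbours of the triangular lattice, so the lattice distance,
raised to `2` for distinct non-adjacent vertices, bounds the graph distance from below. A walk
attaining this bound is a geodesic. Exhibiting one such walk between each pair of the six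
vertices, avoiding the other four, determines all their distances and gives mutual visibility;
general position is then a finite check on these distances. The three sides of the triangle are
geodesics covering all but three vertices, and those three are too far from the extreme vertices
to lie on any geodesic between them.
-/

namespace SierpinskiTriangle

open SimpleGraph

/-- The distance of the triangular lattice on `ℕ × ℕ` (neighbours differ by `(1,0)`, `(0,1)` or
`(1,-1)`), of which every `graph n` is a subgraph. -/
def latticeDist (u v : ℕ × ℕ) : ℕ :=
  max (Nat.dist u.1 v.1) (max (Nat.dist u.2 v.2) (Nat.dist (u.1 + u.2) (v.1 + v.2)))

lemma latticeDist_triangle (u v w : ℕ × ℕ) :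
    latticeDist u w ≤ latticeDist u v + latticeDist v w := by
  simp only [latticeDist]
  have := Nat.dist.triangle_inequality u.1 v.1 w.1
  have := Nat.dist.triangle_inequality u.2 v.2 w.2
  have := Nat.dist.triangle_inequality (u.1 + u.2) (v.1 + v.2) (w.1 + w.2)
  omega

instance inst_s9 (n : ℕ) : DecidablePred (Cell n) := fun _ => inferInstanceAs (Decidable (_ ∧ _))

/-- The only cell that can contain two distinct lattice neighbours is the one at their
coordinatewise minimum. -/
lemma graph_adj_iff {n : ℕ} {u v : ℕ × ℕ} :
    (graph n).Adj u v ↔ u ≠ v ∧ latticeDist u v ≤ 1 ∧ Cell n (min u.1 v.1, min u.2 v.2) := by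
  obtain ⟨x, y⟩ := u
  obtain ⟨z, t⟩ := v
  constructor
  · rintro ⟨hne, ⟨a, b⟩, hc, hu, hv⟩
    have hne' := hne
    simp only [cellCorners, Set.mem_insert_iff, Set.mem_singleton_iff, Prod.ext_iff,
      ne_eq] at hne' hu hv
    have hmin : (min x z, min y t) = (a, b) := by ext <;> dsimp only <;> omega
    refine ⟨hne, ?_, hmin ▸ hc⟩
    simp only [latticeDist, Nat.dist]
    omega
  · rintro ⟨hne, hlat, hc⟩
    simp only [latticeDist, Nat.dist] at hlat
    refine ⟨hne, _, hc, ?_, ?_⟩ <;>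
      simp only [cellCorners, Set.mem_insert_iff, Set.mem_singleton_iff, Prod.ext_iff] <;>
      omega

instance inst_s9_2 (n : ℕ) : DecidableRel (graph n).Adj :=
  fun _ _ => decidable_of_iff _ graph_adj_iff.symm

lemma latticeDist_le_length {n : ℕ} : ∀ {u v : ℕ × ℕ} (p : (graph n).Walk u v),
    latticeDist u v ≤ p.length
  | _, _, .nil => by simp [latticeDist]
  | _, _, .cons h p => by
    have := latticeDist_triangle _ _ _ |>.trans
      (Nat.add_le_add (graph_adj_iff.mp h).2.1 (latticeDist_le_length p))
    rwa [Walk.length_cons, Nat.add_comm]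

/-- A lower bound for the distance in `graph n` that `decide` can evaluate. -/
def distLowerBound (n : ℕ) (u v : ℕ × ℕ) : ℕ :=
  if u = v then 0 else if (graph n).Adj u v then 1 else max 2 (latticeDist u v)

lemma distLowerBound_le_length {n : ℕ} {u v : ℕ × ℕ} (p : (graph n).Walk u v) :
    distLowerBound n u v ≤ p.length := by
  unfold distLowerBound
  split_ifs with huv hadj
  · exact Nat.zero_le _
  · exact Nat.one_le_iff_ne_zero.mpr fun h => huv (Walk.eq_of_length_eq_zero h)
  · refine max_le ?_ (latticeDist_le_length p)
    match p with
    | .nil => exact absurd rfl huv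
    | .cons h .nil => exact absurd h hadj
    | .cons _ (.cons _ _) => simp

lemma distLowerBound_le_dist {n : ℕ} {u v : ℕ × ℕ} (h : (graph n).Reachable u v) :
    distLowerBound n u v ≤ (graph n).dist u v := by
  obtain ⟨p, hp⟩ := h.exists_walk_length_eq_dist
  exact hp ▸ distLowerBound_le_length p

lemma distLowerBound_add_le_of_mem_interval {n : ℕ} {u v x : ℕ × ℕ}
    (hx : x ∈ interval (graph n) u v) :
    distLowerBound n u x + distLowerBound n x v ≤ (graph n).dist u v := by
  obtain ⟨p, hp, hxp⟩ := hx
  have hsplit := congrArg Walk.length (p.take_spec hxp)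
  rw [Walk.length_append] at hsplit
  have := distLowerBound_le_length (p.takeUntil x hxp)
  have := distLowerBound_le_length (p.dropUntil x hxp)
  rw [← show p.length = _ from hp]
  omega

/-- `l` is the support of a walk from `u` to `v` attaining `distLowerBound n u v`, hence of a
shortest walk. -/
def IsGeodesicList (n : ℕ) (u v : ℕ × ℕ) (l : List (ℕ × ℕ)) : Prop :=
  l.head? = some u ∧ l.getLast? = some v ∧ l.IsChain (graph n).Adj ∧
    l.length ≤ distLowerBound n u v + 1

instance (n : ℕ) (u v : ℕ × ℕ) (l : List (ℕ × ℕ)) : Decidable (IsGeodesicList n u v l) :=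
  inferInstanceAs (Decidable (_ ∧ _ ∧ _ ∧ _))

namespace IsGeodesicList

variable {n : ℕ} {u v : ℕ × ℕ} {l : List (ℕ × ℕ)}

lemma exists_walk (h : IsGeodesicList n u v l) :
    ∃ p : (graph n).Walk u v, p.length = distLowerBound n u v ∧ p.support = l := by
  obtain ⟨hu, hv, hchain, hlen⟩ := h
  obtain ⟨a, t, rfl⟩ := List.exists_cons_of_ne_nil (l := l) (by rintro rfl; simp at hu)
  obtain rfl : a = u := by simpa using hu
  have hlast : (a :: t).getLast (List.cons_ne_nil a t) = v := by
    simpa [List.getLast?_eq_some_getLast (List.cons_ne_nil a t)] using hv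
  refine ⟨(Walk.ofSupport (a :: t) (List.cons_ne_nil a t) hchain).copy
    (List.head_cons ..) hlast, le_antisymm ?_ (distLowerBound_le_length _), ?_⟩
  · simp only [Walk.length_copy, Walk.length_ofSupport, List.length_cons] at hlen ⊢
    omega
  · simp only [Walk.support_copy, Walk.support_ofSupport]

lemma dist_eq (h : IsGeodesicList n u v l) : (graph n).dist u v = distLowerBound n u v := by
  obtain ⟨p, hp, -⟩ := h.exists_walk
  exact le_antisymm (hp ▸ dist_le p) (distLowerBound_le_dist ⟨p⟩)

lemma exists_isShortest (h : IsGeodesicList n u v l) :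
    ∃ p : (graph n).Walk u v, IsShortest (graph n) p ∧ p.support = l := by
  obtain ⟨p, hp, hsupp⟩ := h.exists_walk
  exact ⟨p, hp.trans h.dist_eq.symm, hsupp⟩

lemma mem_interval (h : IsGeodesicList n u v l) {x : ℕ × ℕ} (hx : x ∈ l) :
    x ∈ interval (graph n) u v := by
  obtain ⟨p, hp, rfl⟩ := h.exists_isShortest
  exact ⟨p, hp, hx⟩

lemma not_mem_interval (h : IsGeodesicList n u v l) {x : ℕ × ℕ}
    (hx : distLowerBound n u v < distLowerBound n u x + distLowerBound n x v) :
    x ∉ interval (graph n) u v := fun hmem =>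
  (distLowerBound_add_le_of_mem_interval hmem).not_gt (h.dist_eq ▸ hx)

lemma visible (h : IsGeodesicList n u v l) {M : Set (ℕ × ℕ)}
    (hM : ∀ x ∈ l, x ∈ M → x = u ∨ x = v) : Visible (graph n) M u v := by
  obtain ⟨p, hp, rfl⟩ := h.exists_isShortest
  exact ⟨p, hp, hM⟩

lemma mem_verts (h : IsGeodesicList n u v l) (huv : u ≠ v) : u ∈ verts n := by
  obtain ⟨p, -, -⟩ := h.exists_walk
  cases p with
  | nil => exact absurd rfl huv
  | cons hadj _ => obtain ⟨-, c, hc, hu, -⟩ := hadj; exact ⟨c, hc, hu⟩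

end IsGeodesicList

lemma copyVerts_zero (m : ℕ) : copyVerts m (0, 0) = verts m := by
  simp [copyVerts]

def bottomSide : List (ℕ × ℕ) := [(0, 0), (1, 0), (2, 0), (3, 0), (4, 0)]

def leftSide : List (ℕ × ℕ) := [(0, 0), (0, 1), (0, 2), (0, 3), (0, 4)]

def diagonalSide : List (ℕ × ℕ) := [(4, 0), (3, 1), (2, 2), (1, 3), (0, 4)]

def innerVerts : List (ℕ × ℕ) := [(1, 1), (2, 1), (1, 2)]

def properAndExtreme : List (ℕ × ℕ) := innerVerts ++ [(0, 0), (4, 0), (0, 4)]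

/-- For each pair of vertices of `properAndExtreme`, a geodesic of `ST₃²` between them that
meets no third one. -/
def geodesics : List (List (ℕ × ℕ)) :=
  [bottomSide, leftSide, diagonalSide,
   [(0, 0), (1, 0), (1, 1)], [(0, 0), (1, 0), (2, 0), (2, 1)], [(0, 0), (0, 1), (0, 2), (1, 2)],
   [(4, 0), (3, 0), (2, 0), (1, 1)], [(4, 0), (3, 0), (2, 1)], [(4, 0), (3, 1), (2, 2), (1, 2)],
   [(0, 4), (0, 3), (0, 2), (1, 1)], [(0, 4), (1, 3), (2, 2), (2, 1)], [(0, 4), (0, 3), (1, 2)],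
   [(1, 1), (2, 0), (2, 1)], [(1, 1), (0, 2), (1, 2)], [(2, 1), (2, 2), (1, 2)]]

lemma bottomSide_isGeodesicList : IsGeodesicList 2 (0, 0) (4, 0) bottomSide := by decide

lemma leftSide_isGeodesicList : IsGeodesicList 2 (0, 0) (0, 4) leftSide := by decide

lemma diagonalSide_isGeodesicList : IsGeodesicList 2 (4, 0) (0, 4) diagonalSide := by decide

lemma mem_verts_two {v : ℕ × ℕ} (hv : v ∈ verts 2) :
    v ∈ innerVerts ∨ v ∈ bottomSide ∨ v ∈ leftSide ∨ v ∈ diagonalSide := by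
  obtain ⟨⟨a, b⟩, hc, hv⟩ := hv
  have hcorners : ∀ a ∈ List.range 4, ∀ b ∈ List.range 4, Cell 2 (a, b) →
      ∀ v ∈ [(a, b), (a + 1, b), (a, b + 1)],
        v ∈ innerVerts ∨ v ∈ bottomSide ∨ v ∈ leftSide ∨ v ∈ diagonalSide := by
    decide
  have hab : a + b < 4 := hc.2
  exact hcorners a (List.mem_range.mpr (by omega)) b (List.mem_range.mpr (by omega)) hc v
    (by simpa [cellCorners] using hv)

lemma exists_geodesicList : ∀ u ∈ properAndExtreme, ∀ v ∈ properAndExtreme, u ≠ v →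
    ∃ l ∈ geodesics ++ geodesics.map List.reverse,
      IsGeodesicList 2 u v l ∧ ∀ x ∈ l, x ∈ properAndExtreme → x = u ∨ x = v := by
  decide

lemma mem_verts_of_mem_properAndExtreme {u : ℕ × ℕ} (hu : u ∈ properAndExtreme) :
    u ∈ verts 2 := by
  obtain ⟨v, hv, huv⟩ : ∃ v ∈ properAndExtreme, u ≠ v := by
    revert u
    decide
  obtain ⟨l, -, hl, -⟩ := exists_geodesicList u hu v hv huv
  exact hl.mem_verts huv

lemma dist_eq_distLowerBound {u v : ℕ × ℕ} (hu : u ∈ properAndExtreme)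
    (hv : v ∈ properAndExtreme) : (graph 2).dist u v = distLowerBound 2 u v := by
  obtain rfl | huv := eq_or_ne u v
  · simp [distLowerBound]
  · obtain ⟨l, -, hl, -⟩ := exists_geodesicList u hu v hv huv
    exact hl.dist_eq

lemma visible_of_mem_properAndExtreme {u v : ℕ × ℕ} (hu : u ∈ properAndExtreme)
    (hv : v ∈ properAndExtreme) : Visible (graph 2) {x | x ∈ properAndExtreme} u v := by
  obtain rfl | huv := eq_or_ne u v
  · exact ⟨.nil, dist_self.symm, by simp⟩
  · obtain ⟨l, -, hl, hM⟩ := exists_geodesicList u hu v hv huv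
    exact hl.visible hM

lemma properVerts_two_zero : properVerts 2 (0, 0) = {v | v ∈ innerVerts} := by
  ext v
  simp only [properVerts, copyVerts_zero, Nat.zero_add, Set.mem_sdiff, Set.mem_union, not_or,
    Set.mem_ofPred_eq]
  constructor
  · rintro ⟨hv, ⟨hbottom, hleft⟩, hdiagonal⟩
    rcases mem_verts_two hv with h | h | h | h
    · exact h
    · exact absurd (bottomSide_isGeodesicList.mem_interval h) hbottom
    · exact absurd (leftSide_isGeodesicList.mem_interval h) hleft
    · exact absurd (diagonalSide_isGeodesicList.mem_interval h) hdiagonal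
  · intro hv
    have hfar : ∀ v ∈ innerVerts,
        distLowerBound 2 (0, 0) (4, 0) < distLowerBound 2 (0, 0) v + distLowerBound 2 v (4, 0) ∧
        distLowerBound 2 (0, 0) (0, 4) < distLowerBound 2 (0, 0) v + distLowerBound 2 v (0, 4) ∧
        distLowerBound 2 (4, 0) (0, 4) < distLowerBound 2 (4, 0) v + distLowerBound 2 v (0, 4) := by
      decide
    obtain ⟨hbottom, hleft, hdiagonal⟩ := hfar v hv
    exact ⟨mem_verts_of_mem_properAndExtreme (List.mem_append_left _ hv),
      ⟨bottomSide_isGeodesicList.not_mem_interval hbottom,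
        leftSide_isGeodesicList.not_mem_interval hleft⟩,
      diagonalSide_isGeodesicList.not_mem_interval hdiagonal⟩

lemma distLowerBound_ne_add : ∀ u ∈ properAndExtreme, ∀ v ∈ properAndExtreme,
    ∀ w ∈ properAndExtreme, u ≠ v → u ≠ w → v ≠ w →
      distLowerBound 2 u v ≠ distLowerBound 2 u w + distLowerBound 2 w v := by
  decide

/-- In `ST₃²`, the set of the three proper vertices together with the three extreme
vertices (6 vertices total) is simultaneously a mutual-visibility set and a general
position set of `ST₃²`. -/
theorem proper_union_extreme_mv_gp :
    (properVerts 2 ((0, 0) : ℕ × ℕ) ∪ extreme 2).ncard = 6 ∧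
    IsMutualVisSet 2 (properVerts 2 ((0, 0) : ℕ × ℕ) ∪ extreme 2) ∧
    IsGenPosSet 2 (properVerts 2 ((0, 0) : ℕ × ℕ) ∪ extreme 2) := by
  have hM : properVerts 2 (0, 0) ∪ extreme 2 = {x | x ∈ properAndExtreme} := by
    ext x
    simp only [properVerts_two_zero, extreme, properAndExtreme, Set.mem_union, Set.mem_insert_iff,
      Set.mem_singleton_iff, Set.mem_ofPred_eq, List.mem_append, List.mem_cons, List.not_mem_nil]
    tauto
  have hsub : {x | x ∈ properAndExtreme} ⊆ verts 2 := fun _ => mem_verts_of_mem_properAndExtreme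
  rw [hM]
  refine ⟨?_, ⟨hsub, fun u hu v hv => visible_of_mem_properAndExtreme hu hv⟩,
    ⟨hsub, fun u hu v hv w hw huv huw hvw => ?_⟩⟩
  · rw [← List.coe_toFinset, Set.ncard_coe_finset]
    rfl
  · rw [dist_eq_distLowerBound hu hv, dist_eq_distLowerBound hu hw, dist_eq_distLowerBound hw hv]
    exact distLowerBound_ne_add u hu v hv w hw huv huw hvw
end SierpinskiTriangle
end
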